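/- arXiv:1607.06942 — 4 statements merged into one kernel-verified Lean document; each statement's English description precedes it below -/
import Mathlib

section
/- For a poset X with the Alexandrov topology (open sets are up-sets), any functor F : X → D into a complete category D extends, via right Kan extension along the inclusion x ↦ U_x of X^op into Alexandrov opens, to a sheaf on X; i.e., for every Alexandrov open U and every open cover {U_i} of U, the canonical map lim_{x∈U} F(x) → lim over the nerve of the cover is an isomorphism. -/
/-!
STATEMENT 2: For a poset `X` with the Alexandrov topology (open sets are up-sets),
any functor `F : X ⥤ D` into a complete category extends, via right Kan extension
(`U ↦ lim_{x ∈ U} F x`), to a sheaf: for every Alexandrov open `U₀` and every open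
cover `{U i}` of `U₀` by Alexandrov opens, the canonical cone with apex
`lim_{x ∈ U₀} F x` over the nerve of the cover is a limit cone.
-/

open CategoryTheory Limits Opposite

variable {X : Type} [PartialOrder X] {D : Type*} [Category D] [HasLimitsOfSize.{0, 0} D]

/-- The restriction of `F : X ⥤ D` to a subset `S ⊆ X`. -/
def restrictTo (F : X ⥤ D) (S : Set X) : S ⥤ D :=
  (Subtype.mono_coe (fun x => x ∈ S)).functor ⋙ F

/-- The value of the right Kan extension of `F` on a subset: `lim_{x ∈ S} F x`. -/
noncomputable def ranValue (F : X ⥤ D) (S : Set X) : D :=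
  limit (restrictTo F S)

/-- Inclusion of subtypes induced by `S ⊆ T`. -/
def subIncl {S T : Set X} (h : S ⊆ T) : (S : Type) ⥤ (T : Type) :=
  Monotone.functor (f := fun x => (⟨x.1, h x.2⟩ : T)) (fun _ _ hab => hab)

/-- The restriction map `lim_{x ∈ T} F x ⟶ lim_{x ∈ S} F x` for `S ⊆ T`. -/
noncomputable def ranMap (F : X ⥤ D) {S T : Set X} (h : S ⊆ T) :
    ranValue F T ⟶ ranValue F S :=
  limit.pre (restrictTo F T) (subIncl h)

lemma ranMap_comp (F : X ⥤ D) {S T V : Set X} (h1 : S ⊆ T) (h2 : T ⊆ V) :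
    ranMap F h2 ≫ ranMap F h1 = ranMap F (h1.trans h2) := by
  apply limit.hom_ext
  intro j
  erw [Category.assoc]
  show limit.pre (restrictTo F V) (subIncl h2) ≫
      (limit.pre (restrictTo F T) (subIncl h1) ≫ limit.π (restrictTo F S) j) = _
  have e1 : (limit.pre (restrictTo F T) (subIncl h1) ≫ limit.π (restrictTo F S) j :
      limit (restrictTo F T) ⟶ _) = limit.π (restrictTo F T) ((subIncl h1).obj j) :=
    limit.pre_π _ _ _
  erw [e1]
  exact (limit.pre_π (restrictTo F V) (subIncl h2) ((subIncl h1).obj j)).trans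
    (limit.pre_π (restrictTo F V) (subIncl (h1.trans h2)) j).symm

lemma ranMap_id (F : X ⥤ D) {S : Set X} (h : S ⊆ S) : ranMap F h = 𝟙 _ := by
  apply limit.hom_ext
  intro j
  erw [Category.id_comp]
  exact limit.pre_π _ _ _

/-- The nerve of a family of subsets of `X`. -/
def AlexNerve {ι : Type} (U : ι → Set X) : Type :=
  {I : Finset ι // I.Nonempty ∧ (I.inf U).Nonempty}

instance {ι : Type} (U : ι → Set X) : PartialOrder (AlexNerve U) :=
  Subtype.partialOrder _

/-- The diagram over the nerve sending `I` to `lim_{x ∈ U_I} F x`. -/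
noncomputable def nerveDiagram (F : X ⥤ D) {ι : Type} (U : ι → Set X) :
    AlexNerve U ⥤ D where
  obj I := ranValue F (I.1.inf U)
  map {I J} f := ranMap F (Finset.inf_mono (leOfHom f))
  map_id I := ranMap_id F _
  map_comp {I J K} f g := (ranMap_comp F _ _).symm

/-- The canonical cone with apex `lim_{x ∈ U₀} F x` over the nerve diagram of a
family of subsets of `U₀`. -/
noncomputable def nerveCone (F : X ⥤ D) {ι : Type} (U : ι → Set X) (U₀ : Set X)
    (h : ∀ i, U i ⊆ U₀) : Cone (nerveDiagram F U) where
  pt := ranValue F U₀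
  π :=
    { app := fun I =>
        ranMap F (by
          obtain ⟨i, hi⟩ := I.2.1
          exact le_trans (Finset.inf_le hi) (h i))
      naturality := by
        intro I J f
        dsimp [nerveDiagram]
        rw [Category.id_comp, ranMap_comp] }

/-!
A cone over the nerve diagram yields, for each simplex `I` and each `x ∈ U_I`, a map to `F x`.
It does not depend on `I`: two simplices whose intersections contain `x` both map to their
union, which is again a simplex. Hence every point of `⋃ i, U i` gets a well-defined leg, and
these legs form a cone over `lim_{x ∈ ⋃ i, U i} F x` since the `U i` are up-sets. This cone
gives the unique factorisation through the canonical cone.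
-/

lemma ranMap_π (F : X ⥤ D) {S T : Set X} (h : S ⊆ T) (x : S) :
    ranMap F h ≫ limit.π (restrictTo F S) x = limit.π (restrictTo F T) ⟨x.1, h x.2⟩ :=
  limit.pre_π _ _ _

namespace AlexNerve

variable {ι : Type} {U : ι → Set X}

def single (i : ι) {x : X} (hx : x ∈ U i) : AlexNerve U :=
  ⟨{i}, ⟨i, Finset.mem_singleton_self i⟩, ⟨x, by simpa using hx⟩⟩

omit [PartialOrder X] in
lemma mem_single_inf {i : ι} {x y : X} (hx : x ∈ U i) (hy : y ∈ U i) :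
    y ∈ (single i hx).1.inf U := by
  simpa [single] using hy

end AlexNerve

section PointLeg

variable (F : X ⥤ D) {ι : Type} {U : ι → Set X} (c : Cone (nerveDiagram F U))

noncomputable def pointLeg (I : AlexNerve U) {x : X} (hx : x ∈ I.1.inf U) :
    c.pt ⟶ F.obj x :=
  c.π.app I ≫ limit.π (restrictTo F (I.1.inf U)) ⟨x, hx⟩

lemma pointLeg_eq_of_le {I J : AlexNerve U} (hIJ : I ≤ J) {x : X} (hxI : x ∈ I.1.inf U)
    (hxJ : x ∈ J.1.inf U) : pointLeg F c I hxI = pointLeg F c J hxJ := by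
  rw [pointLeg, pointLeg, ← c.w (homOfLE hIJ)]
  exact ((Category.assoc _ _ _).trans
    (whisker_eq _ (ranMap_π F (Finset.inf_mono hIJ) ⟨x, hxJ⟩))).symm

lemma pointLeg_eq (I J : AlexNerve U) {x : X} (hxI : x ∈ I.1.inf U)
    (hxJ : x ∈ J.1.inf U) : pointLeg F c I hxI = pointLeg F c J hxJ := by
  classical
  have hxIJ : x ∈ (I.1 ∪ J.1).inf U := by
    rw [Finset.inf_union]
    exact ⟨hxI, hxJ⟩
  let K : AlexNerve U := ⟨I.1 ∪ J.1, I.2.1.mono Finset.subset_union_left, x, hxIJ⟩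
  exact (pointLeg_eq_of_le F c (J := K) Finset.subset_union_left hxI hxIJ).trans
    (pointLeg_eq_of_le F c (J := K) Finset.subset_union_right hxJ hxIJ).symm

lemma pointLeg_comp_map (I : AlexNerve U) {x y : X} (hxy : x ≤ y) (hx : x ∈ I.1.inf U)
    (hy : y ∈ I.1.inf U) : pointLeg F c I hx ≫ F.map (homOfLE hxy) = pointLeg F c I hy :=
  (Category.assoc _ _ _).trans <| whisker_eq _ <|
    limit.w (restrictTo F (I.1.inf U)) (homOfLE hxy : (⟨x, hx⟩ : (I.1.inf U : Set X)) ⟶ ⟨y, hy⟩)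

lemma pointLeg_nerveCone {U₀ : Set X} (hle : ∀ i, U i ⊆ U₀) (I : AlexNerve U) {x : X}
    (hx : x ∈ I.1.inf U) (hx₀ : x ∈ U₀) :
    pointLeg F (nerveCone F U U₀ hle) I hx = limit.π (restrictTo F U₀) ⟨x, hx₀⟩ :=
  ranMap_π F _ ⟨x, hx⟩

lemma comp_pointLeg {c' : Cone (nerveDiagram F U)} (m : c'.pt ⟶ c.pt)
    (hm : ∀ I, m ≫ c.π.app I = c'.π.app I) (I : AlexNerve U) {x : X} (hx : x ∈ I.1.inf U) :
    m ≫ pointLeg F c I hx = pointLeg F c' I hx :=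
  (Category.assoc _ _ _).symm.trans (eq_whisker (hm I) _)

end PointLeg

section Cover

variable (F : X ⥤ D) {ι : Type} {U : ι → Set X}

noncomputable def coverLeg (c : Cone (nerveDiagram F U)) {x : X} (hx : x ∈ ⋃ i, U i) :
    c.pt ⟶ F.obj x :=
  pointLeg F c (.single _ (Set.mem_iUnion.1 hx).choose_spec)
    (AlexNerve.mem_single_inf _ (Set.mem_iUnion.1 hx).choose_spec)

lemma coverLeg_eq_pointLeg (c : Cone (nerveDiagram F U)) {x : X} (hx : x ∈ ⋃ i, U i)
    (I : AlexNerve U) (hxI : x ∈ I.1.inf U) : coverLeg F c hx = pointLeg F c I hxI :=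
  pointLeg_eq F c _ _ _ _

/-- Naturality is where the `U i` being up-sets enters: if `x ≤ y` and `x ∈ U i`, then both
legs can be computed in the simplex `{i}`. -/
noncomputable def coverCone (hup : ∀ i, IsUpperSet (U i)) (c : Cone (nerveDiagram F U)) :
    Cone (restrictTo F (⋃ i, U i)) where
  pt := c.pt
  π :=
    { app := fun x => coverLeg F c x.2
      naturality := fun x y f => by
        obtain ⟨i, hxi⟩ := Set.mem_iUnion.1 x.2
        have hx := AlexNerve.mem_single_inf hxi hxi
        have hy := AlexNerve.mem_single_inf hxi (hup i (leOfHom f) hxi)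
        show 𝟙 _ ≫ coverLeg F c y.2 = coverLeg F c x.2 ≫ F.map (homOfLE (leOfHom f))
        rw [Category.id_comp, coverLeg_eq_pointLeg F c x.2 _ hx,
          coverLeg_eq_pointLeg F c y.2 _ hy, pointLeg_comp_map] }

noncomputable def isLimitNerveConeOfIUnion (hup : ∀ i, IsUpperSet (U i))
    (hle : ∀ i, U i ⊆ ⋃ i, U i) : IsLimit (nerveCone F U (⋃ i, U i) hle) where
  lift c := limit.lift _ (coverCone F hup c)
  fac c I := by
    refine limit.hom_ext fun ⟨x, hx⟩ => (Category.assoc _ _ _).trans ?_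
    have hx₀ : x ∈ ⋃ i, U i := I.2.1.elim fun i hi => hle i (Finset.inf_le (f := U) hi hx)
    exact (whisker_eq _ (pointLeg_nerveCone F hle I hx hx₀)).trans <|
      (limit.lift_π _ _).trans (coverLeg_eq_pointLeg F c hx₀ I hx)
  uniq c m hm := by
    refine limit.hom_ext (F := restrictTo F _) fun ⟨x, hx⟩ => ?_
    obtain ⟨i, hxi⟩ := Set.mem_iUnion.1 hx
    have hxI := AlexNerve.mem_single_inf hxi hxi
    exact (whisker_eq m (pointLeg_nerveCone F hle _ hxI hx)).symm.trans <|
      (comp_pointLeg F _ m hm _ hxI).trans <|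
        (coverLeg_eq_pointLeg F c hx _ hxI).symm.trans
          (limit.lift_π (coverCone F hup c) ⟨x, hx⟩).symm

end Cover

theorem alexandrov_ran_is_sheaf_general (F : X ⥤ D) (U₀ : Set X)
    {ι : Type} (U : ι → Set X) (hup : ∀ i, IsUpperSet (U i))
    (hle : ∀ i, U i ⊆ U₀) (hcov : (⋃ i, U i) = U₀) :
    Nonempty (IsLimit (nerveCone F U U₀ hle)) := by
  subst hcov
  exact ⟨isLimitNerveConeOfIUnion F hup hle⟩

/-- The right Kan extension of any functor `F : X ⥤ D` along the inclusion of a poset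
into its Alexandrov opens is a sheaf: for every up-set `U₀` and every cover of `U₀` by
up-sets, the canonical cone over the nerve of the cover is a limit cone. -/
theorem alexandrov_ran_is_sheaf (F : X ⥤ D) (U₀ : Set X) (h₀ : IsUpperSet U₀)
    {ι : Type} (U : ι → Set X) (hup : ∀ i, IsUpperSet (U i))
    (hle : ∀ i, U i ⊆ U₀) (hcov : (⋃ i, U i) = U₀) :
    Nonempty (IsLimit (nerveCone F U U₀ hle)) :=
  alexandrov_ran_is_sheaf_general F U₀ U hup hle hcov
end

section
/- Let X be a poset (the face poset of a cell complex), σ ∈ X, and W a vector space. The sheaf [σ]^W on X, defined by [σ]^W(τ) = W if τ ≤ σ and 0 otherwise, with identity restriction maps where nonzero, is an injective object in the category of functors X → Vect. -/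
/-!
`[σ]^W` is the value at `W` of a right adjoint of evaluation at `σ`: a morphism `F ⟶ [σ]^W`
is the same as a linear map `F σ → W`, its component at `τ ≤ σ` being that map precomposed with
the restriction `F τ → F σ`. Evaluation is exact, so it preserves monomorphisms, and a right
adjoint of a mono-preserving functor sends injective objects to injective objects. Finally `W`,
being a vector space, is an injective module.
-/

open CategoryTheory

/-- The elementary injective cellular sheaf `[σ]^W`, supported on the closure
`{τ : τ ≤ σ}` with value `W` and identity restriction maps. -/
def elementaryInjectiveSheaf (k : Type) [Field k] {X : Type} [PartialOrder X] (σ : X)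
    (W : Type) [AddCommGroup W] [Module k W] : X ⥤ ModuleCat k where
  obj τ := ModuleCat.of k (PLift (τ ≤ σ) → W)
  map {τ τ'} h :=
    ModuleCat.ofHom
    { toFun := fun g p => g ⟨(leOfHom h).trans p.down⟩
      map_add' := fun _ _ => rfl
      map_smul' := fun _ _ => rfl }
  map_id _ := rfl
  map_comp _ _ := rfl

section

variable (k : Type) [Field k] {X : Type} [PartialOrder X] (σ : X)

def elementaryInjectiveSheafFunctor : ModuleCat k ⥤ (X ⥤ ModuleCat k) where
  obj W := elementaryInjectiveSheaf k σ W
  map f := { app _ := ModuleCat.ofHom (LinearMap.compLeft f.hom _) }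

def evaluationAdjunctionElementaryInjectiveSheaf :
    (evaluation X (ModuleCat k)).obj σ ⊣ elementaryInjectiveSheafFunctor k σ :=
  Adjunction.mkOfUnitCounit
    { unit :=
        { app F :=
            { app τ := ModuleCat.ofHom <|
                LinearMap.pi fun p : PLift (τ ≤ σ) => (F.map (homOfLE p.down)).hom
              naturality _ _ u := by
                ext x
                funext p
                exact (ConcreteCategory.congr_hom (F.map_comp u (homOfLE p.down)) x).symm }
          naturality _ _ f := by
            ext τ x
            funext p
            exact (ConcreteCategory.congr_hom (f.naturality (homOfLE p.down)) x).symm }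
      counit.app W := ModuleCat.ofHom (LinearMap.proj ⟨le_rfl⟩)
      left_triangle := by
        ext F x
        exact ConcreteCategory.congr_hom (F.map_id σ) x }

end

/-- `[σ]^W` is an injective cellular sheaf. -/
theorem elementaryInjectiveSheaf_injective (k : Type) [Field k] {X : Type}
    [PartialOrder X] (σ : X) (W : Type) [AddCommGroup W] [Module k W] :
    Injective (elementaryInjectiveSheaf k σ W) :=
  have := Module.injective_object_of_injective_module k W
    (inj := Module.injective_of_isSemisimpleRing k W)
  Injective.injective_of_adjoint (evaluationAdjunctionElementaryInjectiveSheaf k σ) (.of k W)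
end

section
/- Let X be a finite poset. Every injective object of the functor category [X, Vect] is isomorphic to a finite direct sum of elementary injectives ⊕_σ [σ]^{V_σ}, where [σ]^V is the constant sheaf with value V supported on the down-set {τ : τ ≤ σ}. -/
open CategoryTheory Limits

/-!
Let `σ` be maximal in the support of the injective sheaf `I`. Because `I` vanishes strictly
above `σ`, the skyscraper at `σ` with value `I σ` maps into `I`; it also embeds into
`[σ]^{I σ}`, so injectivity of `I` extends the first map along the second, and the extension
is a section of the canonical map `I ⟶ [σ]^{I σ}`. Hence `I ≅ K ⊞ [σ]^{I σ}`, where the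
kernel `K` is a direct summand of `I`, hence injective, and is supported on the support of
`I` minus `σ`; induct on the support.
-/

section Abelian

variable {C : Type*} [Category C] [Abelian C] {A B : C}

noncomputable def splittingKernelSequence (f : A ⟶ B) [IsSplitEpi f] :
    (ShortComplex.kernelSequence f).Splitting :=
  .ofExactOfSection _ (ShortComplex.kernelSequence_exact f) (section_ f : B ⟶ A)
    (IsSplitEpi.id f) inferInstance

lemma injective_kernel_of_isSplitEpi (f : A ⟶ B) [IsSplitEpi f] [Injective A] :
    Injective (kernel f) :=
  let s := splittingKernelSequence f
  Retract.injective ⟨kernel.ι f, s.r, s.f_r⟩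

end Abelian

noncomputable def sigmaIsoOfIsZero {C : Type*} [Category C] [HasZeroMorphisms C] {ι : Type*}
    [DecidableEq ι] (F : ι → C) [HasCoproduct F] (i : ι) (hF : ∀ j ≠ i, IsZero (F j)) :
    ∐ F ≅ F i where
  hom := Sigma.desc fun j => if h : j = i then eqToHom (congrArg F h) else 0
  inv := Sigma.ι F i
  hom_inv_id := Sigma.hom_ext _ _ fun j => by
    by_cases h : j = i
    · subst h; simp
    · exact (hF j h).eq_of_src _ _

noncomputable def sigmaBiprodIso {C : Type*} [Category C] [Preadditive C] [HasBinaryBiproducts C]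
    {ι : Type*} [HasCoproductsOfShape ι C] (F G : ι → C) :
    (∐ fun i => F i ⊞ G i) ≅ (∐ F) ⊞ (∐ G) where
  hom := Sigma.desc fun i => biprod.map (Sigma.ι F i) (Sigma.ι G i)
  inv := biprod.desc (Sigma.desc fun i => biprod.inl ≫ Sigma.ι (fun i => F i ⊞ G i) i)
    (Sigma.desc fun i => biprod.inr ≫ Sigma.ι (fun i => F i ⊞ G i) i)
  hom_inv_id := Sigma.hom_ext _ _ fun i => biprod.hom_ext' _ _ (by simp) (by simp)
  inv_hom_id := biprod.hom_ext' _ _ (Sigma.hom_ext _ _ fun i => by simp)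
    (Sigma.hom_ext _ _ fun i => by simp)

variable {k : Type} [Field k] {X : Type} [PartialOrder X]

variable (k) in
def elementaryInjectiveFunctor (σ : X) : ModuleCat k ⥤ (X ⥤ ModuleCat k) where
  obj W := elementaryInjectiveSheaf k σ W
  map φ := { app τ := ModuleCat.ofHom (φ.hom.compLeft (PLift (τ ≤ σ))) }

instance (σ : X) : (elementaryInjectiveFunctor k σ).Additive := {}

instance (σ : X) : PreservesBinaryBiproducts (elementaryInjectiveFunctor k σ) :=
  preservesBinaryBiproducts_of_preservesBiproducts _

/-- The unit of the adjunction between evaluation at `σ` and `elementaryInjectiveFunctor k σ`. -/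
def toElementaryInjectiveSheaf (F : X ⥤ ModuleCat k) (σ : X) :
    F ⟶ elementaryInjectiveSheaf k σ (F.obj σ) where
  app τ := ModuleCat.ofHom (LinearMap.pi fun p => (F.map (homOfLE p.down)).hom)
  naturality τ τ' h := by
    ext x
    funext p
    show F.map (homOfLE p.down) (F.map h x) = F.map (homOfLE _) x
    rw [← ModuleCat.comp_apply, ← F.map_comp]
    rfl

instance (F : X ⥤ ModuleCat k) (σ : X) : Mono ((toElementaryInjectiveSheaf F σ).app σ) :=
  (ModuleCat.mono_iff_injective _).2 fun x y hxy => by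
    have : F.map (homOfLE le_rfl) x = F.map (homOfLE le_rfl) y := congrFun hxy ⟨le_rfl⟩
    simpa using this

lemma comp_toElementaryInjectiveSheaf_eq_id {F : X ⥤ ModuleCat k} {σ : X}
    (w : elementaryInjectiveSheaf k σ (F.obj σ) ⟶ F) (hw : ∀ y, w.app σ y = y ⟨le_rfl⟩) :
    w ≫ toElementaryInjectiveSheaf F σ = 𝟙 _ := by
  ext τ y
  funext p
  show F.map (homOfLE p.down) (w.app τ y) = y p
  rw [← ModuleCat.comp_apply, ← w.naturality, ModuleCat.comp_apply, hw]
  rfl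

lemma isZero_kernel_toElementaryInjectiveSheaf_obj (F : X ⥤ ModuleCat k) (σ : X) :
    IsZero ((kernel (toElementaryInjectiveSheaf F σ)).obj σ) :=
  IsZero.of_mono_eq_zero _ <| zero_of_comp_mono ((toElementaryInjectiveSheaf F σ).app σ) <| by
    rw [← NatTrans.comp_app, kernel.condition, NatTrans.app_zero]

section Skyscraper

variable [DecidableEq X]

def skyscraper (σ : X) (W : ModuleCat k) : X ⥤ ModuleCat k where
  obj τ := ModuleCat.of k (PLift (τ = σ) → W)
  map {τ _} _ := ModuleCat.ofHom
    { toFun g _ := if h : τ = σ then g ⟨h⟩ else 0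
      map_add' := by intros; funext; split_ifs <;> simp
      map_smul' := by intros; funext; split_ifs <;> simp }
  map_id τ := by
    refine ModuleCat.hom_ext (LinearMap.ext fun g => funext fun ⟨h⟩ => ?_)
    show (if h : τ = σ then g ⟨h⟩ else 0) = g ⟨h⟩
    rw [dif_pos h]
  map_comp {τ τ' τ''} f g := by
    refine ModuleCat.hom_ext (LinearMap.ext fun x => funext fun ⟨h⟩ => ?_)
    show (if h : τ = σ then x ⟨h⟩ else 0)
      = if h : τ' = σ then (if h : τ = σ then x ⟨h⟩ else 0) else 0
    subst h
    by_cases hτ : τ = τ''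
    · obtain rfl : τ' = τ := le_antisymm (hτ ▸ leOfHom g) (leOfHom f)
      simp [hτ]
    · simp [hτ]

def skyscraperToElementaryInjectiveSheaf (σ : X) (W : ModuleCat k) :
    skyscraper σ W ⟶ elementaryInjectiveSheaf k σ W where
  app τ := ModuleCat.ofHom
    { toFun g _ := if h : τ = σ then g ⟨h⟩ else 0
      map_add' := by intros; funext; split_ifs <;> simp
      map_smul' := by intros; funext; split_ifs <;> simp }
  naturality τ τ' f := by
    refine ModuleCat.hom_ext (LinearMap.ext fun x => funext fun p => ?_)
    show (if h : τ' = σ then (if h : τ = σ then x ⟨h⟩ else 0) else 0)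
      = if h : τ = σ then x ⟨h⟩ else 0
    by_cases hτ : τ = σ
    · obtain rfl : τ' = σ := le_antisymm p.down (hτ ▸ leOfHom f)
      simp [hτ]
    · simp [hτ]

instance (σ : X) (W : ModuleCat k) : Mono (skyscraperToElementaryInjectiveSheaf σ W) := by
  refine (NatTrans.mono_iff_mono_app _).2 fun τ => (ModuleCat.mono_iff_injective _).2 ?_
  intro g g' hgg'
  funext ⟨h⟩
  have : (if h : τ = σ then g ⟨h⟩ else 0) = if h : τ = σ then g' ⟨h⟩ else 0 :=
    congrFun hgg' ⟨h.le⟩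
  simpa only [dif_pos h] using this

def skyscraperTo (F : X ⥤ ModuleCat k) (σ : X) (hσ : ∀ ρ, σ < ρ → IsZero (F.obj ρ)) :
    skyscraper σ (F.obj σ) ⟶ F where
  app τ := ModuleCat.ofHom
    { toFun g := if h : τ = σ then F.map (eqToHom h.symm) (g ⟨h⟩) else 0
      map_add' := by intros; split_ifs <;> simp
      map_smul' := by intros; split_ifs <;> simp }
  naturality τ τ' f := by
    refine ModuleCat.hom_ext (LinearMap.ext fun x => ?_)
    show (if h : τ' = σ then F.map (eqToHom h.symm) (if h : τ = σ then x ⟨h⟩ else 0) else 0)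
      = F.map f (if h : τ = σ then F.map (eqToHom h.symm) (x ⟨h⟩) else 0)
    by_cases hτ : τ = σ
    · subst hτ
      by_cases hτ' : τ' = τ
      · subst hτ'
        simp [Subsingleton.elim f (𝟙 _)]
      · have hlt : τ < τ' := lt_of_le_of_ne (leOfHom f) (Ne.symm hτ')
        have := ModuleCat.subsingleton_of_isZero (hσ τ' hlt)
        exact Subsingleton.elim _ _
    · simp [hτ]

lemma isSplitEpi_toElementaryInjectiveSheaf (I : X ⥤ ModuleCat k) [Injective I] (σ : X)
    (hσ : ∀ ρ, σ < ρ → IsZero (I.obj ρ)) :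
    IsSplitEpi (toElementaryInjectiveSheaf I σ) := by
  set u := skyscraperTo I σ hσ
  set j := skyscraperToElementaryInjectiveSheaf σ (I.obj σ)
  refine ⟨⟨Injective.factorThru u j, comp_toElementaryInjectiveSheaf_eq_id _ fun y => ?_⟩⟩
  let g : (skyscraper σ (I.obj σ)).obj σ := fun _ => y ⟨le_rfl⟩
  have hj : j.app σ g = y := by
    funext p
    show (if h : σ = σ then g ⟨h⟩ else 0) = y p
    rw [dif_pos rfl]
  have hu : u.app σ g = y ⟨le_rfl⟩ := by
    show (if h : σ = σ then I.map (eqToHom h.symm) (g ⟨h⟩) else 0) = y ⟨le_rfl⟩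
    rw [dif_pos rfl, eqToHom_refl, I.map_id]
    rfl
  have h : (Injective.factorThru u j).app σ (j.app σ g) = u.app σ g := by
    rw [← ModuleCat.comp_apply, ← NatTrans.comp_app, Injective.comp_factorThru]
  rwa [hj, hu] at h

end Skyscraper

def HasElementaryDecomposition (I : X ⥤ ModuleCat k) : Prop :=
  ∃ V : X → ModuleCat k, Nonempty (I ≅ ∐ fun σ : X => elementaryInjectiveSheaf k σ (V σ))

namespace HasElementaryDecomposition

open ZeroObject

lemma of_iso {I J : X ⥤ ModuleCat k} (e : I ≅ J) (hJ : HasElementaryDecomposition J) :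
    HasElementaryDecomposition I :=
  let ⟨V, ⟨e'⟩⟩ := hJ
  ⟨V, ⟨e ≪≫ e'⟩⟩

lemma of_isZero {I : X ⥤ ModuleCat k} (hI : IsZero I) : HasElementaryDecomposition I :=
  ⟨fun _ => 0, ⟨hI.iso <| (IsZero.iff_id_eq_zero _).2 <| Sigma.hom_ext _ _ fun σ =>
    ((elementaryInjectiveFunctor k σ).map_isZero (isZero_zero _)).eq_of_src _ _⟩⟩

lemma biprod_elementaryInjectiveSheaf [DecidableEq X] {K : X ⥤ ModuleCat k}
    (hK : HasElementaryDecomposition K) (σ : X) (W : ModuleCat k) :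
    HasElementaryDecomposition (K ⊞ elementaryInjectiveSheaf k σ W) := by
  obtain ⟨V, ⟨e⟩⟩ := hK
  let W' : X → ModuleCat k := fun ρ => if ρ = σ then W else 0
  have hW' : ∀ ρ ≠ σ, IsZero (elementaryInjectiveSheaf k ρ (W' ρ)) := fun ρ hρ =>
    (elementaryInjectiveFunctor k ρ).map_isZero (by simpa [W', hρ] using isZero_zero _)
  refine ⟨fun ρ => V ρ ⊞ W' ρ, ⟨?_⟩⟩
  calc K ⊞ elementaryInjectiveSheaf k σ W
      ≅ (∐ fun ρ => elementaryInjectiveSheaf k ρ (V ρ)) ⊞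
          (∐ fun ρ => elementaryInjectiveSheaf k ρ (W' ρ)) :=
        biprod.mapIso e ((elementaryInjectiveFunctor k σ).mapIso (eqToIso (if_pos rfl).symm) ≪≫
          (sigmaIsoOfIsZero _ σ hW').symm)
    _ ≅ ∐ fun ρ =>
          elementaryInjectiveSheaf k ρ (V ρ) ⊞ elementaryInjectiveSheaf k ρ (W' ρ) :=
        (sigmaBiprodIso _ _).symm
    _ ≅ ∐ fun ρ => elementaryInjectiveSheaf k ρ ↑(V ρ ⊞ W' ρ) :=
        Sigma.mapIso fun ρ => ((elementaryInjectiveFunctor k ρ).mapBiprod _ _).symm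

end HasElementaryDecomposition

theorem hasElementaryDecomposition_of_injective [DecidableEq X] (S : Finset X)
    (I : X ⥤ ModuleCat k) [Injective I] (hS : ∀ ρ ∉ S, IsZero (I.obj ρ)) :
    HasElementaryDecomposition I := by
  induction S using Finset.strongInduction generalizing I with | H S ih =>
  obtain rfl | ⟨σ, hσ⟩ := S.eq_empty_or_nonempty.imp id Finset.exists_maximal
  · exact .of_isZero (Functor.isZero _ fun ρ => hS ρ (Finset.notMem_empty ρ))
  have : IsSplitEpi (toElementaryInjectiveSheaf I σ) :=
    isSplitEpi_toElementaryInjectiveSheaf I σ fun ρ hρ => hS ρ fun hρS => hσ.not_gt hρS hρ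
  have := injective_kernel_of_isSplitEpi (toElementaryInjectiveSheaf I σ)
  have hK : ∀ ρ ∉ S.erase σ, IsZero ((kernel (toElementaryInjectiveSheaf I σ)).obj ρ) := by
    intro ρ hρ
    by_cases hρσ : ρ = σ
    · exact hρσ ▸ isZero_kernel_toElementaryInjectiveSheaf_obj I σ
    · exact (hS ρ fun h => hρ (Finset.mem_erase.2 ⟨hρσ, h⟩)).of_mono
        ((kernel.ι (toElementaryInjectiveSheaf I σ)).app ρ)
  exact .of_iso (splittingKernelSequence _).isoBinaryBiproduct
    ((ih _ (S.erase_ssubset hσ.prop) _ hK).biprod_elementaryInjectiveSheaf σ (I.obj σ))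

/-- Every injective cellular sheaf on a finite poset decomposes as a direct sum of
elementary injective sheaves. -/
theorem injective_iso_direct_sum_elementary (k : Type) [Field k] {X : Type}
    [PartialOrder X] [Fintype X] (I : X ⥤ ModuleCat k) (hI : Injective I) :
    ∃ V : X → ModuleCat k,
      Nonempty (I ≅ ∐ fun σ : X => elementaryInjectiveSheaf k σ (V σ)) := by
  classical
  exact hasElementaryDecomposition_of_injective Finset.univ I fun ρ hρ =>
    (hρ (Finset.mem_univ ρ)).elim
end

section
/- Let X be a finite poset. Every projective object of the functor category [X, Vect] is isomorphic to a finite direct sum of elementary projectives ⊕_σ {σ}^{V_σ}, where {σ}^V is the constant sheaf with value V supported on the up-set {τ : σ ≤ τ}. -/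
/-!
For each point `τ` choose a complement `C τ` of the subspace of `P τ` spanned by the images of
the restriction maps from points below `τ`. The inclusions `C σ → P σ` induce a map
`π : ∐ σ, {σ}^{C σ} ⟶ P`, surjective by well-founded induction on `τ`. Its kernel at `τ` lies
in the part of the source reached from below, because the top summand `{τ}^{C τ}` maps `C τ`
identically onto a complement of the corresponding part of `P τ`. If `P` is projective, `π` has
a section `s`, and the idempotent `π ≫ s` over `P` must be the identity, so `π` is an
isomorphism.
-/

open CategoryTheory Limits

/-- The elementary projective cellular sheaf `{σ}^W`, supported on the open star
`{τ : σ ≤ τ}` with value `W` and identity restriction maps. -/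
noncomputable def elementaryProjectiveSheaf (k : Type) [Field k] {X : Type} [PartialOrder X] (σ : X)
    (W : Type) [AddCommGroup W] [Module k W] : X ⥤ ModuleCat k where
  obj τ := ModuleCat.of k (PLift (σ ≤ τ) →₀ W)
  map {τ τ'} h := ModuleCat.ofHom (Finsupp.lmapDomain W k
    (fun p : PLift (σ ≤ τ) => (⟨p.down.trans (leOfHom h)⟩ : PLift (σ ≤ τ'))))
  map_id τ := by
    have : (fun p => (⟨p.down.trans (leOfHom (𝟙 τ))⟩ : PLift (σ ≤ τ))) = id :=
      funext fun p => rfl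
    apply ModuleCat.hom_ext
    show Finsupp.lmapDomain W k _ = _
    rw [this, Finsupp.lmapDomain_id]
    rfl
  map_comp {τ τ' τ''} h h' := by
    apply ModuleCat.hom_ext
    show Finsupp.lmapDomain W k _ = _
    rw [show (fun p => (⟨p.down.trans (leOfHom (h ≫ h'))⟩ : PLift (σ ≤ τ''))) =
        (fun p => (⟨p.down.trans (leOfHom h')⟩ : PLift (σ ≤ τ''))) ∘
          (fun p => (⟨p.down.trans (leOfHom h)⟩ : PLift (σ ≤ τ'))) from funext fun p => rfl,
      Finsupp.lmapDomain_comp]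
    rfl

namespace CategoryTheory

variable {k : Type*} [Ring k] {X : Type*} [Preorder X]

def Functor.belowRange (G : X ⥤ ModuleCat k) (τ : X) : Submodule k (G.obj τ) :=
  ⨆ ρ : {ρ : X // ρ < τ}, LinearMap.range (G.map (homOfLE ρ.2.le)).hom

namespace Functor

theorem belowRange_le_iff {G : X ⥤ ModuleCat k} {τ : X} {M : Submodule k (G.obj τ)} :
    G.belowRange τ ≤ M ↔ ∀ ρ (h : ρ < τ) (x : G.obj ρ), G.map (homOfLE h.le) x ∈ M := by
  refine ⟨fun hM ρ h x => hM ?_, fun hM => iSup_le fun ρ => ?_⟩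
  · exact le_iSup (fun ρ : {ρ : X // ρ < τ} => LinearMap.range (G.map (homOfLE ρ.2.le)).hom)
      ⟨ρ, h⟩ ⟨x, rfl⟩
  · rintro _ ⟨x, rfl⟩
    exact hM ρ.1 ρ.2 x

theorem map_mem_belowRange (G : X ⥤ ModuleCat k) {ρ τ : X} (h : ρ < τ) (x : G.obj ρ) :
    G.map (homOfLE h.le) x ∈ G.belowRange τ :=
  belowRange_le_iff.mp le_rfl ρ h x

end Functor

namespace NatTrans

variable {G H : X ⥤ ModuleCat k}

theorem app_mem_belowRange (α : G ⟶ H) {τ : X} {x : G.obj τ} (hx : x ∈ G.belowRange τ) :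
    α.app τ x ∈ H.belowRange τ := by
  refine (Functor.belowRange_le_iff (M := (H.belowRange τ).comap (α.app τ).hom)).mpr
    (fun ρ h y => ?_) hx
  change α.app τ (G.map (homOfLE h.le) y) ∈ H.belowRange τ
  rw [NatTrans.naturality_apply]
  exact H.map_mem_belowRange h _

theorem app_eq_app_of_mem_belowRange (α β : G ⟶ H) {τ : X} (h : ∀ ρ < τ, α.app ρ = β.app ρ)
    {x : G.obj τ} (hx : x ∈ G.belowRange τ) : α.app τ x = β.app τ x := by
  refine (Functor.belowRange_le_iff (M := LinearMap.eqLocus (α.app τ).hom (β.app τ).hom)).mpr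
    (fun ρ hρ y => ?_) hx
  change α.app τ (G.map (homOfLE hρ.le) y) = β.app τ (G.map (homOfLE hρ.le) y)
  rw [NatTrans.naturality_apply, NatTrans.naturality_apply, h ρ hρ]

theorem belowRange_le_range_app (α : G ⟶ H) {τ : X}
    (h : ∀ ρ < τ, Function.Surjective (α.app ρ)) :
    H.belowRange τ ≤ LinearMap.range (α.app τ).hom := by
  refine Functor.belowRange_le_iff.mpr fun ρ hρ y => ?_
  obtain ⟨x, rfl⟩ := h ρ hρ y
  exact ⟨G.map (homOfLE hρ.le) x, NatTrans.naturality_apply α _ x⟩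

/-- `e x - x` is killed by `π`, so it lies in the part reached from below and is fixed by `e`
(the identity below `τ` by induction), while `e (e x - x) = 0` by idempotence. -/
theorem eq_id_of_idem_of_ker_le_belowRange [WellFoundedLT X] {π : G ⟶ H}
    (hπ : ∀ τ, LinearMap.ker (π.app τ).hom ≤ G.belowRange τ) {e : G ⟶ G} (he : e ≫ e = e)
    (heπ : e ≫ π = π) : e = 𝟙 G := by
  ext τ : 2
  induction τ using WellFoundedLT.induction with
  | _ τ IH =>
    ext x
    have hker : e.app τ x - x ∈ G.belowRange τ := hπ τ <| by
      change π.app τ (e.app τ x - x) = 0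
      rw [map_sub, ← ConcreteCategory.comp_apply, ← NatTrans.comp_app, heπ, sub_self]
    have hfix : e.app τ (e.app τ x - x) = e.app τ x - x :=
      app_eq_app_of_mem_belowRange e (𝟙 G) IH hker
    have hkill : e.app τ (e.app τ x - x) = 0 := by
      rw [map_sub, ← ConcreteCategory.comp_apply, ← NatTrans.comp_app, he, sub_self]
    exact sub_eq_zero.mp (hfix.symm.trans hkill)

theorem isIso_of_projective_of_ker_le_belowRange [WellFoundedLT X] {P : X ⥤ ModuleCat k}
    [Projective P] (π : G ⟶ P) [Epi π] (hπ : ∀ τ, LinearMap.ker (π.app τ).hom ≤ G.belowRange τ) :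
    IsIso π := by
  have hs : Projective.factorThru (𝟙 P) π ≫ π = 𝟙 P := Projective.factorThru_comp _ _
  refine ⟨Projective.factorThru (𝟙 P) π, eq_id_of_idem_of_ker_le_belowRange hπ ?_ ?_, hs⟩
  · simp only [Category.assoc, reassoc_of% hs]
  · simp only [Category.assoc, hs, Category.comp_id]

end NatTrans

end CategoryTheory

namespace ModuleCat

variable {k : Type*} [Ring k]

theorem iSup_range_ι_eq_top {J : Type*} [Category J] {F : J ⥤ ModuleCat k} {c : Cocone F}
    (hc : IsColimit c) :
    (⨆ j, LinearMap.range (c.ι.app j).hom : Submodule k c.pt) = ⊤ := by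
  set S : Submodule k c.pt := ⨆ j, LinearMap.range (c.ι.app j).hom
  have hq : ModuleCat.ofHom S.mkQ = 0 := hc.hom_ext fun j => by
    ext x
    simp only [comp_zero]
    exact (Submodule.Quotient.mk_eq_zero S).mpr (Submodule.mem_iSup_of_mem j ⟨x, rfl⟩)
  rw [← S.ker_mkQ, show S.mkQ = 0 from congrArg ModuleCat.Hom.hom hq, LinearMap.ker_zero]

end ModuleCat

namespace elementaryProjectiveSheaf

variable {k : Type} [Field k] {X : Type} [PartialOrder X] {W : Type} [AddCommGroup W] [Module k W]

noncomputable def lsingle {σ τ : X} (h : σ ≤ τ) : W →ₗ[k] (elementaryProjectiveSheaf k σ W).obj τ :=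
  Finsupp.lsingle ⟨h⟩

theorem map_lsingle {σ τ τ' : X} (h : σ ≤ τ) (f : τ ⟶ τ') (w : W) :
    (elementaryProjectiveSheaf k σ W).map f (lsingle h w) = lsingle (h.trans (leOfHom f)) w :=
  Finsupp.mapDomain_single

theorem exists_eq_lsingle {σ τ : X} (h : σ ≤ τ) (x : (elementaryProjectiveSheaf k σ W).obj τ) :
    ∃ w : W, x = lsingle h w := by
  change PLift (σ ≤ τ) →₀ W at x
  exact ⟨x ⟨h⟩, Finsupp.ext fun _ => Finsupp.single_eq_same.symm⟩

theorem eq_zero_of_not_le {σ τ : X} (h : ¬σ ≤ τ) (x : (elementaryProjectiveSheaf k σ W).obj τ) :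
    x = 0 :=
  have : IsEmpty (PLift (σ ≤ τ)) := ⟨fun p => h p.down⟩
  Subsingleton.elim (α := PLift (σ ≤ τ) →₀ W) x 0

noncomputable def lift {G : X ⥤ ModuleCat k} {σ : X} (f : W →ₗ[k] G.obj σ) :
    elementaryProjectiveSheaf k σ W ⟶ G where
  app τ := ModuleCat.ofHom
    (Finsupp.lsum k fun p : PLift (σ ≤ τ) => (G.map (homOfLE p.down)).hom ∘ₗ f)
  naturality τ τ' h := by
    ext : 1
    refine Finsupp.lhom_ext fun ⟨p⟩ w => ?_
    change Finsupp.lsum k _ ((elementaryProjectiveSheaf k σ W).map h (lsingle p w)) =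
      G.map h (Finsupp.lsum k _ (Finsupp.single (⟨p⟩ : PLift (σ ≤ τ)) w))
    rw [map_lsingle]
    change Finsupp.lsum k _ (Finsupp.single _ w) = _
    rw [Finsupp.lsum_single, Finsupp.lsum_single]
    change G.map (homOfLE _) (f w) = G.map h (G.map (homOfLE p) (f w))
    rw [← ConcreteCategory.comp_apply, ← G.map_comp]
    rfl

theorem lift_app_lsingle {G : X ⥤ ModuleCat k} {σ τ : X} (f : W →ₗ[k] G.obj σ) (h : σ ≤ τ)
    (w : W) : (lift f).app τ (lsingle h w) = G.map (homOfLE h) (f w) :=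
  Finsupp.lsum_single _ _ _ _

variable (P : X ⥤ ModuleCat k)

/-- The new generators of `P` at `τ`. -/
noncomputable def topComplement (τ : X) : Submodule k (P.obj τ) :=
  (Submodule.exists_isCompl (P.belowRange τ)).choose

theorem isCompl_belowRange_topComplement (τ : X) :
    IsCompl (P.belowRange τ) (topComplement P τ) :=
  (Submodule.exists_isCompl (P.belowRange τ)).choose_spec

noncomputable abbrev coverSummand (σ : X) : X ⥤ ModuleCat k :=
  elementaryProjectiveSheaf k σ (ModuleCat.of k (topComplement P σ))

noncomputable abbrev cover : X ⥤ ModuleCat k :=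
  ∐ coverSummand P

noncomputable def coverπ : cover P ⟶ P :=
  Sigma.desc fun σ => lift (topComplement P σ).subtype

theorem coverπ_app_ι_app (σ τ : X) (x : (coverSummand P σ).obj τ) :
    (coverπ P).app τ ((Sigma.ι (coverSummand P) σ).app τ x) =
      (lift (topComplement P σ).subtype).app τ x := by
  rw [← ConcreteCategory.comp_apply, ← NatTrans.comp_app, coverπ, Sigma.ι_desc]

noncomputable def coverTop (τ : X) : topComplement P τ →ₗ[k] (cover P).obj τ :=
  ((Sigma.ι (coverSummand P) τ).app τ).hom ∘ₗ lsingle le_rfl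

theorem coverπ_app_coverTop (τ : X) (w : topComplement P τ) :
    (coverπ P).app τ (coverTop P τ w) = w := by
  change (coverπ P).app τ ((Sigma.ι (coverSummand P) τ).app τ (lsingle le_rfl w)) = w
  rw [coverπ_app_ι_app, lift_app_lsingle]
  simp

theorem belowRange_sup_range_coverTop (τ : X) :
    (cover P).belowRange τ ⊔ LinearMap.range (coverTop P τ) = ⊤ := by
  rw [eq_top_iff, ← ModuleCat.iSup_range_ι_eq_top
    (isColimitOfPreserves ((evaluation X _).obj τ) (colimit.isColimit _))]
  refine iSup_le fun ⟨σ⟩ => ?_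
  rintro _ ⟨x, rfl⟩
  change (Sigma.ι (coverSummand P) σ).app τ x ∈ _
  by_cases hστ : σ ≤ τ
  · obtain ⟨w, rfl⟩ := exists_eq_lsingle hστ x
    rw [← map_lsingle le_rfl (homOfLE hστ), NatTrans.naturality_apply]
    rcases hστ.eq_or_lt with rfl | hlt
    · exact Submodule.mem_sup_right ⟨w, by simp [coverTop]⟩
    · exact Submodule.mem_sup_left ((cover P).map_mem_belowRange hlt _)
  · rw [eq_zero_of_not_le hστ x, map_zero]
    exact zero_mem _

theorem coverπ_app_surjective [WellFoundedLT X] (τ : X) :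
    Function.Surjective ((coverπ P).app τ) := by
  induction τ using WellFoundedLT.induction with
  | _ τ IH =>
    refine LinearMap.range_eq_top.mp (eq_top_iff.mpr ?_)
    rw [← (isCompl_belowRange_topComplement P τ).sup_eq_top]
    refine sup_le (NatTrans.belowRange_le_range_app _ IH) fun w hw => ?_
    exact ⟨coverTop P τ ⟨w, hw⟩, coverπ_app_coverTop P τ _⟩

theorem ker_coverπ_app_le (τ : X) :
    LinearMap.ker ((coverπ P).app τ).hom ≤ (cover P).belowRange τ := by
  intro x hx
  have hx' : x ∈ (cover P).belowRange τ ⊔ LinearMap.range (coverTop P τ) := by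
    rw [belowRange_sup_range_coverTop]; trivial
  obtain ⟨a, ha, _, ⟨w, rfl⟩, rfl⟩ := Submodule.mem_sup.mp hx'
  have hsum : (coverπ P).app τ a + w = 0 := by
    rw [← coverπ_app_coverTop P τ w, ← map_add]
    exact hx
  have hw : (w : P.obj τ) ∈ P.belowRange τ := by
    rw [eq_neg_of_add_eq_zero_right hsum]
    exact neg_mem (NatTrans.app_mem_belowRange _ ha)
  have hw0 : w = 0 := by
    ext
    exact Submodule.disjoint_def.mp (isCompl_belowRange_topComplement P τ).disjoint _ hw w.2
  simpa [hw0] using ha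

end elementaryProjectiveSheaf

/-- Every projective cellular sheaf on a finite poset decomposes as a direct sum of
elementary projective sheaves. -/
theorem projective_iso_direct_sum_elementary (k : Type) [Field k] {X : Type}
    [PartialOrder X] [Fintype X] (P : X ⥤ ModuleCat k) (hP : Projective P) :
    ∃ V : X → ModuleCat k,
      Nonempty (P ≅ ∐ fun σ : X => elementaryProjectiveSheaf k σ (V σ)) := by
  let π := elementaryProjectiveSheaf.coverπ P
  have : ∀ τ, Epi (π.app τ) := fun τ =>
    (ModuleCat.epi_iff_surjective _).mpr (elementaryProjectiveSheaf.coverπ_app_surjective P τ)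
  have : Epi π := NatTrans.epi_of_epi_app π
  have : IsIso π := NatTrans.isIso_of_projective_of_ker_le_belowRange π
    (elementaryProjectiveSheaf.ker_coverπ_app_le P)
  exact ⟨fun σ => ModuleCat.of k (elementaryProjectiveSheaf.topComplement P σ), ⟨(asIso π).symm⟩⟩
end
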